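/- arXiv:1707.00833 — 3 statements merged into one kernel-verified Lean document; each statement's English description precedes it below -/
import Mathlib

section
/- Let α ∈ [0, 1/2] and let X_1, …, X_m be i.i.d. random variables with P(X_k = 1) = α, P(X_k = −1) = α, and P(X_k = 0) = 1 − 2α. Let Y = Σ_{k=1}^m X_k. Then for every positive integer r: E[Y^r] = 0 if r is odd, and E[Y^r] ≤ 2α·(rm)^{r/2} if r is even. -/
set_option autoImplicit false

open MeasureTheory ProbabilityTheory

/-!
Expanding `Y ^ r` and using independence,
`E[Y ^ r] = ∑_{p : Fin r → Fin m} ∏_k E[X_k ^ #p⁻¹(k)]`. A single `X_k` has moment `1` of order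
`0`, `0` of odd order and `2α` of positive even order, so the term of `p` vanishes unless every
fibre of `p` has even size, which is impossible when `r` is odd, and is otherwise at most `2α`.
Maps with all fibres even are few: the fibre of the first point contains a second point, and
removing both leaves such a map on two points fewer, so their number `E(N)` on `N` points satisfies
`E(N) ≤ (N - 1) m E(N - 2)`, whence `E(r) ≤ (r m) ^ (r / 2)`.
-/

open Finset

lemma sub_one_mul_mul_pow_le (N K : ℕ) :
    (N - 1) * K * ((N - 2) * K) ^ ((N - 2) / 2) ≤ (N * K) ^ (N / 2) := by
  rcases Nat.lt_or_ge N 2 with hN | hN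
  · interval_cases N <;> simp
  · have : N / 2 = (N - 2) / 2 + 1 := by omega
    rw [this, pow_succ']
    gcongr <;> omega

section EvenFibers

variable {ι κ : Type*} [Fintype ι] [DecidableEq ι] [DecidableEq κ]

lemma even_card_fiber_restrict_iff {p : ι → κ} {i₀ j : ι} (hne : i₀ ≠ j)
    (hp : p i₀ = p j) (k : κ) :
    Even #{x : {x // x ∉ ({i₀, j} : Finset ι)} | p x = k} ↔ Even #{i | p i = k} := by
  set s : Finset ι := {i₀, j}
  have hout : #{x : {x // x ∉ s} | p x = k} = #{i | p i = k ∧ i ∉ s} := by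
    rw [← card_map (Function.Embedding.subtype _)]
    congr 1
    ext i
    simp [and_comm]
  have hin : #{i | p i = k ∧ i ∈ s} = if p i₀ = k then 2 else 0 := by
    rw [show ({i | p i = k ∧ i ∈ s} : Finset ι) = s.filter (p · = k) by ext; simp [and_comm]]
    split_ifs with h
    · rw [filter_true_of_mem (by simp [s, h, ← hp]), card_pair hne]
    · rw [filter_false_of_mem (by simp [s, h, ← hp]), card_empty]
  rw [hout, ← card_filter_add_card_filter_not (s := {i | p i = k}) (· ∈ s)]
  simp only [filter_filter, hin]
  split_ifs <;> simp [Nat.even_add]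

variable [Fintype κ]

variable (ι κ) in
def evenFiberMaps : Finset (ι → κ) := {p | ∀ k, Even #{i | p i = k}}

lemma card_evenFiberMaps_filter_pair_le {i₀ j : ι} (hne : i₀ ≠ j) (k : κ) :
    #{p ∈ evenFiberMaps ι κ | p i₀ = k ∧ p j = k} ≤
      #(evenFiberMaps {x // x ∉ ({i₀, j} : Finset ι)} κ) := by
  refine card_le_card_of_injOn (fun p x => p x) (fun p hp => ?_) (fun p hp q hq hpq => ?_)
  · simp only [evenFiberMaps, coe_filter, mem_filter, mem_univ, true_and] at hp ⊢
    exact fun k' => (even_card_fiber_restrict_iff hne (hp.2.1.trans hp.2.2.symm) k').2 (hp.1 k')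
  · simp only [coe_filter] at hp hq
    funext i
    by_cases hi : i ∈ ({i₀, j} : Finset ι)
    · rcases mem_insert.1 hi with rfl | hi
      · rw [hp.2.1, hq.2.1]
      · rw [mem_singleton.1 hi, hp.2.2, hq.2.2]
    · exact congrFun hpq ⟨i, hi⟩

lemma evenFiberMaps_subset_biUnion (i₀ : ι) :
    evenFiberMaps ι κ ⊆ (univ.erase i₀).biUnion fun j =>
      univ.biUnion fun k => {p ∈ evenFiberMaps ι κ | p i₀ = k ∧ p j = k} := by
  intro p hp
  have hfiber : 1 < #{i | p i = p i₀} := by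
    have h₀ : 0 < #{i | p i = p i₀} := card_pos.2 ⟨i₀, by simp⟩
    obtain ⟨c, hc⟩ := (mem_filter.1 hp).2 (p i₀)
    omega
  obtain ⟨j, hj, hji₀⟩ := exists_mem_ne hfiber i₀
  simp only [mem_biUnion, mem_erase, mem_univ, mem_filter]
  exact ⟨j, ⟨hji₀, trivial⟩, p i₀, trivial, hp, rfl, (mem_filter.1 hj).2⟩

theorem card_evenFiberMaps_le :
    #(evenFiberMaps ι κ) ≤ (Fintype.card ι * Fintype.card κ) ^ (Fintype.card ι / 2) := by
  induction h : Fintype.card ι using Nat.strong_induction_on generalizing ι with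
  | _ N ih =>
  rcases isEmpty_or_nonempty ι with hι | ⟨⟨i₀⟩⟩
  · rw [← h, Fintype.card_eq_zero, pow_zero]
    exact card_le_one.2 fun p _ q _ => Subsingleton.elim p q
  · calc #(evenFiberMaps ι κ)
        ≤ ∑ j ∈ univ.erase i₀, ∑ k : κ, #{p ∈ evenFiberMaps ι κ | p i₀ = k ∧ p j = k} :=
          (card_le_card (evenFiberMaps_subset_biUnion i₀)).trans
            (card_biUnion_le.trans (sum_le_sum fun j _ => card_biUnion_le))
      _ ≤ ∑ j ∈ univ.erase i₀, ∑ k : κ, ((N - 2) * Fintype.card κ) ^ ((N - 2) / 2) := by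
          gcongr with j hj k
          have hcard : Fintype.card {x // x ∉ ({i₀, j} : Finset ι)} = N - 2 := by
            rw [Fintype.card_subtype_compl, Fintype.card_coe,
              card_pair (ne_of_mem_erase hj).symm, h]
          refine (card_evenFiberMaps_filter_pair_le (ne_of_mem_erase hj).symm k).trans ?_
          exact ih (N - 2) (by have := Fintype.card_pos_iff.2 ⟨i₀⟩; omega) hcard
      _ = (N - 1) * Fintype.card κ * ((N - 2) * Fintype.card κ) ^ ((N - 2) / 2) := by
          simp [card_erase_of_mem, h, mul_assoc]
      _ ≤ (N * Fintype.card κ) ^ (N / 2) := sub_one_mul_mul_pow_le N _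

variable (M : ℕ → ℝ) {β : ℝ}

lemma prod_moments_fiber_eq_zero (hModd : ∀ c, Odd c → M c = 0) {p : ι → κ}
    (hp : p ∉ evenFiberMaps ι κ) : ∏ k, M #{i | p i = k} = 0 := by
  simp only [evenFiberMaps, mem_filter, mem_univ, true_and, not_forall, Nat.not_even_iff_odd] at hp
  obtain ⟨k, hk⟩ := hp
  exact prod_eq_zero (mem_univ k) (hModd _ hk)

lemma evenFiberMaps_eq_empty (hι : Odd (Fintype.card ι)) : evenFiberMaps ι κ = ∅ := by
  refine eq_empty_of_forall_notMem fun p hp => Nat.not_even_iff_odd.2 hι ?_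
  rw [← card_univ, card_eq_sum_card_fiberwise (f := p) (t := univ) (fun i _ => mem_univ _)]
  exact even_sum _ fun k _ => (mem_filter.1 hp).2 k

lemma prod_moments_fiber_le (hM0 : M 0 = 1) (hMeven : ∀ c, Even c → c ≠ 0 → M c = β)
    (hβ0 : 0 ≤ β) (hβ1 : β ≤ 1) {p : ι → κ} (hp : p ∈ evenFiberMaps ι κ) (i₀ : ι) :
    ∏ k, M #{i | p i = k} ≤ β := by
  have hfiber (k : κ) : M #{i | p i = k} = if #{i | p i = k} = 0 then 1 else β := by
    split_ifs with h
    · rw [h, hM0]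
    · exact hMeven _ ((mem_filter.1 hp).2 k) h
  have hne : #{i | p i = p i₀} ≠ 0 := card_ne_zero_of_mem (mem_filter.2 ⟨mem_univ i₀, rfl⟩)
  calc ∏ k, M #{i | p i = k}
      = M #{i | p i = p i₀} * ∏ k ∈ univ.erase (p i₀), M #{i | p i = k} :=
        (mul_prod_erase _ _ (mem_univ _)).symm
    _ ≤ β * 1 := by
        rw [hfiber, if_neg hne]
        gcongr
        exact prod_le_one (fun k _ => by rw [hfiber]; split_ifs <;> linarith)
          (fun k _ => by rw [hfiber]; split_ifs <;> linarith)
    _ = β := mul_one β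

lemma sum_prod_moments_fiber_eq_sum_evenFiberMaps (hModd : ∀ c, Odd c → M c = 0) :
    ∑ p : ι → κ, ∏ k, M #{i | p i = k} = ∑ p ∈ evenFiberMaps ι κ, ∏ k, M #{i | p i = k} :=
  (sum_subset (subset_univ _) fun _ _ hp => prod_moments_fiber_eq_zero M hModd hp).symm

theorem sum_prod_moments_fiber_eq_zero (hModd : ∀ c, Odd c → M c = 0)
    (hι : Odd (Fintype.card ι)) : ∑ p : ι → κ, ∏ k, M #{i | p i = k} = 0 := by
  rw [sum_prod_moments_fiber_eq_sum_evenFiberMaps M hModd, evenFiberMaps_eq_empty hι, sum_empty]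

theorem sum_prod_moments_fiber_le [Nonempty ι] (hM0 : M 0 = 1) (hModd : ∀ c, Odd c → M c = 0)
    (hMeven : ∀ c, Even c → c ≠ 0 → M c = β) (hβ0 : 0 ≤ β) (hβ1 : β ≤ 1) :
    ∑ p : ι → κ, ∏ k, M #{i | p i = k} ≤
      β * ((Fintype.card ι * Fintype.card κ : ℕ) : ℝ) ^ (Fintype.card ι / 2) := by
  obtain ⟨i₀⟩ := ‹Nonempty ι›
  rw [sum_prod_moments_fiber_eq_sum_evenFiberMaps M hModd]
  calc ∑ p ∈ evenFiberMaps ι κ, ∏ k, M #{i | p i = k}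
      ≤ #(evenFiberMaps ι κ) • β :=
        sum_le_card_nsmul _ _ _ fun p hp => prod_moments_fiber_le M hM0 hMeven hβ0 hβ1 hp i₀
    _ ≤ β * ((Fintype.card ι * Fintype.card κ : ℕ) : ℝ) ^ (Fintype.card ι / 2) := by
        rw [nsmul_eq_mul, mul_comm, ← Nat.cast_pow]
        gcongr
        exact card_evenFiberMaps_le

end EvenFibers

lemma Finset.prod_comp_eq_prod_pow_card_fiber {ι κ M : Type*} [Fintype ι] [Fintype κ]
    [DecidableEq κ] [CommMonoid M] (f : κ → M) (p : ι → κ) :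
    ∏ i, f (p i) = ∏ k, f k ^ #{i | p i = k} := by
  rw [← prod_fiberwise' univ p f]
  simp only [prod_const]

namespace MeasureTheory

variable {Ω β : Type*} [MeasurableSpace Ω] {μ : Measure Ω}

lemma ae_mem_of_sum_measure_preimage_singleton_eq_one [MeasurableSpace β]
    [MeasurableSingletonClass β] [IsProbabilityMeasure μ] {X : Ω → β} (hX : Measurable X)
    {s : Finset β} (hs : ∑ x ∈ s, μ (X ⁻¹' {x}) = 1) : ∀ᵐ ω ∂μ, X ω ∈ s := by
  rw [sum_measure_preimage_singleton s fun x _ => hX (measurableSet_singleton x)] at hs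
  exact (ae_mem_iff_measure_eq (hX s.measurableSet).nullMeasurableSet).2
    (by rw [hs, measure_univ])

lemma integral_comp_eq_sum_of_ae_mem [MeasurableSpace β] [MeasurableSingletonClass β]
    [IsFiniteMeasure μ] {E : Type*} [NormedAddCommGroup E] [NormedSpace ℝ E] [CompleteSpace E]
    {X : Ω → β} (hX : Measurable X) {s : Finset β} (hs : ∀ᵐ ω ∂μ, X ω ∈ s) (g : β → E) :
    ∫ ω, g (X ω) ∂μ = ∑ x ∈ s, μ.real (X ⁻¹' {x}) • g x := by
  classical
  have hsimple : (fun ω => g (X ω)) =ᵐ[μ]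
      fun ω => ∑ x ∈ s, (X ⁻¹' {x}).indicator (fun _ => g x) ω := by
    filter_upwards [hs] with ω hω
    simp [Set.indicator_apply, hω]
  rw [integral_congr_ae hsimple, integral_finsetSum]
  · exact sum_congr rfl fun x _ => integral_indicator_const _ (hX (measurableSet_singleton x))
  · exact fun x _ => (integrable_const _).indicator (hX (measurableSet_singleton x))

end MeasureTheory

namespace ProbabilityTheory

variable {Ω κ : Type*} [MeasurableSpace Ω] {μ : Measure Ω}

lemma integral_sum_pow_eq_sum_prod_integral [Fintype κ] [DecidableEq κ] [IsFiniteMeasure μ]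
    {X : κ → Ω → ℝ} (hX : ∀ k, Measurable (X k)) (hindep : iIndepFun X μ)
    (hbdd : ∀ k, ∀ᵐ ω ∂μ, |X k ω| ≤ 1) (r : ℕ) :
    ∫ ω, (∑ k, X k ω) ^ r ∂μ = ∑ p : Fin r → κ, ∏ k, ∫ ω, X k ω ^ #{i | p i = k} ∂μ := by
  have hint (c : κ → ℕ) : Integrable (fun ω => ∏ k, X k ω ^ c k) μ := by
    refine .of_bound
      (Finset.measurable_prod _ fun k _ => (hX k).pow_const _).aestronglyMeasurable 1 ?_
    filter_upwards [ae_all_iff.2 hbdd] with ω hω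
    rw [Real.norm_eq_abs, abs_prod]
    exact prod_le_one (fun k _ => abs_nonneg _)
      fun k _ => by rw [abs_pow]; exact pow_le_one₀ (abs_nonneg _) (hω k)
  have hmultinomial (ω : Ω) :
      (∑ k, X k ω) ^ r = ∑ p : Fin r → κ, ∏ k, X k ω ^ #{i | p i = k} := by
    rw [Fintype.sum_pow]
    exact sum_congr rfl fun p _ => prod_comp_eq_prod_pow_card_fiber (X · ω) p
  simp_rw [hmultinomial]
  rw [integral_finsetSum _ fun p _ => hint _]
  refine sum_congr rfl fun p _ => ?_
  exact hindep.integral_fun_prod_comp (f := fun k x => x ^ #{i | p i = k})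
    (fun k => (hX k).aemeasurable) fun k => (measurable_id.pow_const _).aestronglyMeasurable

-- `0 ^ 0 = 1`, so this is also correct at order `0`.
def threePointMoment (α : ℝ) (c : ℕ) : ℝ := α + α * (-1) ^ c + (1 - 2 * α) * 0 ^ c

lemma threePointMoment_zero (α : ℝ) : threePointMoment α 0 = 1 := by
  simp only [threePointMoment]; ring

lemma threePointMoment_of_odd (α : ℝ) {c : ℕ} (hc : Odd c) : threePointMoment α c = 0 := by
  simp [threePointMoment, hc.neg_one_pow, hc.pos.ne']

lemma threePointMoment_of_even (α : ℝ) {c : ℕ} (hc : Even c) (hc0 : c ≠ 0) :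
    threePointMoment α c = 2 * α := by
  simp [threePointMoment, hc.neg_one_pow, hc0]; ring

variable [IsProbabilityMeasure μ] {X : Ω → ℝ} {α : ℝ}

lemma ae_mem_of_threePoint (hX : Measurable X) (hα : 0 ≤ α) (hα' : α ≤ 1 / 2)
    (h1 : μ {ω | X ω = 1} = ENNReal.ofReal α) (hm1 : μ {ω | X ω = -1} = ENNReal.ofReal α)
    (h0 : μ {ω | X ω = 0} = ENNReal.ofReal (1 - 2 * α)) :
    ∀ᵐ ω ∂μ, X ω ∈ ({1, -1, 0} : Finset ℝ) := by
  refine ae_mem_of_sum_measure_preimage_singleton_eq_one hX ?_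
  rw [sum_insert (by norm_num), sum_pair (by norm_num)]
  simp only [Set.preimage, Set.mem_singleton_iff, h1, hm1, h0]
  rw [← ENNReal.ofReal_add hα (by linarith), ← ENNReal.ofReal_add hα (by linarith)]
  rw [show α + (α + (1 - 2 * α)) = 1 by ring, ENNReal.ofReal_one]

lemma integral_pow_eq_threePointMoment (hX : Measurable X) (hα : 0 ≤ α) (hα' : α ≤ 1 / 2)
    (h1 : μ {ω | X ω = 1} = ENNReal.ofReal α) (hm1 : μ {ω | X ω = -1} = ENNReal.ofReal α)
    (h0 : μ {ω | X ω = 0} = ENNReal.ofReal (1 - 2 * α)) (c : ℕ) :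
    ∫ ω, X ω ^ c ∂μ = threePointMoment α c := by
  rw [integral_comp_eq_sum_of_ae_mem hX (ae_mem_of_threePoint hX hα hα' h1 hm1 h0) (· ^ c),
    sum_insert (by norm_num), sum_pair (by norm_num)]
  simp only [measureReal_def, Set.preimage, Set.mem_singleton_iff, h1, hm1, h0,
    ENNReal.toReal_ofReal hα, ENNReal.toReal_ofReal (by linarith : 0 ≤ 1 - 2 * α), threePointMoment]
  simp [add_assoc]

end ProbabilityTheory

theorem three_point_sum_moments_general
    {Ω : Type*} [MeasurableSpace Ω] (μ : Measure Ω) [IsProbabilityMeasure μ]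
    (m : ℕ) (α : ℝ) (hα : α ∈ Set.Icc (0 : ℝ) (1 / 2))
    (X : Fin m → Ω → ℝ)
    (hmeas : ∀ k, Measurable (X k))
    (hindep : iIndepFun X μ)
    (hone : ∀ k, μ {ω | X k ω = 1} = ENNReal.ofReal α)
    (hmone : ∀ k, μ {ω | X k ω = -1} = ENNReal.ofReal α)
    (hzero : ∀ k, μ {ω | X k ω = 0} = ENNReal.ofReal (1 - 2 * α))
    (Y : Ω → ℝ) (hY : ∀ ω, Y ω = ∑ k, X k ω)
    (r : ℕ) (hr : 0 < r) :
    (Odd r → ∫ ω, (Y ω) ^ r ∂μ = 0)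
    ∧ (Even r → ∫ ω, (Y ω) ^ r ∂μ ≤ 2 * α * ((r * m : ℕ) : ℝ) ^ (r / 2)) := by
  obtain ⟨hα0, hα1⟩ := hα
  have hbdd (k : Fin m) : ∀ᵐ ω ∂μ, |X k ω| ≤ 1 := by
    filter_upwards [ae_mem_of_threePoint (hmeas k) hα0 hα1 (hone k) (hmone k) (hzero k)] with ω hω
    simp only [mem_insert, mem_singleton] at hω
    rcases hω with h | h | h <;> simp [h]
  have hexpand : ∫ ω, Y ω ^ r ∂μ = ∑ p : Fin r → Fin m, ∏ k, threePointMoment α #{i | p i = k} := by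
    simp_rw [hY, integral_sum_pow_eq_sum_prod_integral hmeas hindep hbdd,
      integral_pow_eq_threePointMoment (hmeas _) hα0 hα1 (hone _) (hmone _) (hzero _)]
  have : Nonempty (Fin r) := ⟨⟨0, hr⟩⟩
  refine ⟨fun hodd => ?_, fun _ => ?_⟩
  · rw [hexpand]
    exact sum_prod_moments_fiber_eq_zero _ (fun _ => threePointMoment_of_odd α)
      (by simpa using hodd)
  · rw [hexpand]
    simpa using sum_prod_moments_fiber_le (ι := Fin r) (κ := Fin m) _ (threePointMoment_zero α)
      (fun _ => threePointMoment_of_odd α) (fun _ => threePointMoment_of_even α)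
      (by linarith) (by linarith)

/-- Claim D.4 (moments of a sum of i.i.d. symmetric three-point variables). -/
theorem three_point_sum_moments
    {Ω : Type*} [MeasurableSpace Ω] (μ : Measure Ω) [IsProbabilityMeasure μ]
    (m : ℕ) (hm : 0 < m) (α : ℝ) (hα : α ∈ Set.Icc (0 : ℝ) (1 / 2))
    (X : Fin m → Ω → ℝ)
    (hmeas : ∀ k, Measurable (X k))
    (hindep : iIndepFun X μ)
    (hone : ∀ k, μ {ω | X k ω = 1} = ENNReal.ofReal α)
    (hmone : ∀ k, μ {ω | X k ω = -1} = ENNReal.ofReal α)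
    (hzero : ∀ k, μ {ω | X k ω = 0} = ENNReal.ofReal (1 - 2 * α))
    (Y : Ω → ℝ) (hY : ∀ ω, Y ω = ∑ k, X k ω)
    (r : ℕ) (hr : 0 < r) :
    (Odd r → ∫ ω, (Y ω) ^ r ∂μ = 0)
    ∧ (Even r → ∫ ω, (Y ω) ^ r ∂μ ≤ 2 * α * ((r * m : ℕ) : ℝ) ^ (r / 2)) :=
  three_point_sum_moments_general μ m α hα X hmeas hindep hone hmone hzero Y hY r hr
end

section
/- For positive integers k and ℓ with k ≤ ℓ, define C_{k,ℓ} = max{ Π_{i=1}^k r_i^{r_i} : each r_i is an even integer with r_i ≥ 2, and Σ_{i=1}^k r_i = 2ℓ }. Then C_{k,ℓ} ≤ 2^{2ℓ}·(ℓ − k + 1)^{2ℓ − 2k + 2}. -/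
set_option autoImplicit false

private lemma bern (n b d : ℕ) : b ^ (n+1) + (n+1) * b^n * d ≤ (b + d) ^ (n+1) := by
  induction n with
  | zero => simp
  | succ m ih =>
    have h := Nat.mul_le_mul_right (b + d) ih
    have hexp : (b ^ (m+1) + (m+1) * b^m * d) * (b + d)
        = b ^ (m+2) + (m+2) * b^(m+1) * d + (m+1) * b^m * d^2 := by ring
    calc b ^ (m+2) + (m+2) * b^(m+1) * d
        ≤ (b ^ (m+1) + (m+1) * b^m * d) * (b + d) := by rw [hexp]; omega
      _ ≤ (b + d) ^ (m+1) * (b + d) := h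
      _ = (b + d) ^ (m+2) := by ring

private lemma pair_aux (a b : ℕ) (ha : 1 ≤ a) (hb : 1 ≤ b) (hab : a ≤ b) :
    a ^ a * b ^ b ≤ (a + b - 1) ^ (a + b - 1) := by
  obtain ⟨m, hm⟩ : ∃ m, b = m + 1 := ⟨b - 1, by omega⟩
  obtain ⟨d, hd⟩ : ∃ d, a = d + 1 := ⟨a - 1, by omega⟩
  have key : b ^ b * a ≤ (b + d) ^ b := by
    have h := bern m b d
    have h2 : b ^ b * a = b ^ (m+1) + (m+1) * b^m * d := by
      rw [hd, hm]; ring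
    have h3 : (b + d) ^ b = (b + d) ^ (m+1) := by rw [hm]
    rw [h2, h3]; exact h
  have hc : a + b - 1 = b + d := by omega
  rw [hc]
  have h1 : a ^ d ≤ (b + d) ^ d := Nat.pow_le_pow_left (by omega) d
  calc a ^ a * b ^ b = a ^ d * (b ^ b * a) := by rw [hd]; ring
    _ ≤ (b + d) ^ d * (b + d) ^ b := Nat.mul_le_mul h1 key
    _ = (b + d) ^ (b + d) := by rw [← pow_add]; ring_nf

private lemma pair (a b : ℕ) (ha : 1 ≤ a) (hb : 1 ≤ b) :
    a ^ a * b ^ b ≤ (a + b - 1) ^ (a + b - 1) := by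
  rcases le_total a b with h | h
  · exact pair_aux a b ha hb h
  · have := pair_aux b a hb ha h
    calc a ^ a * b ^ b = b ^ b * a ^ a := by ring
      _ ≤ (b + a - 1) ^ (b + a - 1) := this
      _ = (a + b - 1) ^ (a + b - 1) := by rw [Nat.add_comm b a]

private lemma prod_pow_self_le (k : ℕ) (hk : 0 < k) (s : Fin k → ℕ) (hs : ∀ i, 1 ≤ s i) :
    ∏ i, (s i) ^ (s i) ≤ ((∑ i, s i) - k + 1) ^ ((∑ i, s i) - k + 1) := by
  induction k with
  | zero => exact absurd hk (lt_irrefl 0)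
  | succ k ih =>
    rcases Nat.eq_zero_or_pos k with hk0 | hk0
    · subst hk0
      have e1 : ∏ i, (s i) ^ (s i) = (s 0) ^ (s 0) := Fin.prod_univ_one _
      have e2 : ∑ i, s i = s 0 := Fin.sum_univ_one _
      have h1 := hs 0
      rw [e1, e2]
      have h2 : s 0 - 1 + 1 = s 0 := by omega
      rw [h2]
    · set t : Fin k → ℕ := fun i => s i.castSucc with ht
      have hts : ∀ i, 1 ≤ t i := fun i => hs _
      have hsum : ∑ i, s i = ∑ i, t i + s (Fin.last k) := Fin.sum_univ_castSucc s
      have hprod : ∏ i, (s i) ^ (s i) =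
          (∏ i, (t i) ^ (t i)) * (s (Fin.last k)) ^ (s (Fin.last k)) :=
        Fin.prod_univ_castSucc (fun i => (s i) ^ (s i))
      have hT : k ≤ ∑ i, t i := by
        calc k = ∑ _i : Fin k, 1 := by simp
          _ ≤ ∑ i, t i := Finset.sum_le_sum fun i _ => hts i
      have hIH := ih hk0 t hts
      set T := ∑ i, t i with hTdef
      set b := s (Fin.last k) with hbdef
      have hb : 1 ≤ b := hs _
      set a := T - k + 1 with hadef
      have ha : 1 ≤ a := by omega
      have hpair := pair a b ha hb
      have hfin : a + b - 1 = (T + b) - (k + 1) + 1 := by omega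
      calc ∏ i, (s i) ^ (s i) = (∏ i, (t i) ^ (t i)) * b ^ b := hprod
        _ ≤ a ^ a * b ^ b := Nat.mul_le_mul_right _ hIH
        _ ≤ (a + b - 1) ^ (a + b - 1) := hpair
        _ = ((∑ i, s i) - (k+1) + 1) ^ ((∑ i, s i) - (k+1) + 1) := by
            rw [hsum, ← hfin]

/-- Claim D.5 (combinatorial bound): any product `∏ rᵢ^{rᵢ}` over even integers
`rᵢ ≥ 2` summing to `2ℓ` is at most `2^{2ℓ} (ℓ-k+1)^{2ℓ-2k+2}`. -/
theorem even_tuple_product_bound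
    (k ℓ : ℕ) (hk : 0 < k) (hkℓ : k ≤ ℓ)
    (r : Fin k → ℕ) (heven : ∀ i, Even (r i)) (hge : ∀ i, 2 ≤ r i)
    (hsum : ∑ i, r i = 2 * ℓ) :
    ∏ i, (r i) ^ (r i) ≤ 2 ^ (2 * ℓ) * (ℓ - k + 1) ^ (2 * ℓ - 2 * k + 2) := by
  set s : Fin k → ℕ := fun i => r i / 2 with hsdef
  have hr2 : ∀ i, r i = 2 * s i := by
    intro i
    obtain ⟨m, hm⟩ := heven i
    simp only [hsdef]
    omega
  have hs1 : ∀ i, 1 ≤ s i := by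
    intro i
    have := hge i
    simp only [hsdef]
    omega
  have hssum : ∑ i, s i = ℓ := by
    have h : ∑ i, r i = ∑ i, 2 * s i := Finset.sum_congr rfl fun i _ => hr2 i
    rw [← Finset.mul_sum] at h
    omega
  have hM := prod_pow_self_le k hk s hs1
  rw [hssum] at hM
  set M := ℓ - k + 1 with hMdef
  have hexp : 2 * ℓ - 2 * k + 2 = 2 * M := by omega
  have h1 : ∏ i, (r i) ^ (r i) = 2 ^ (2 * ℓ) * ∏ i, ((s i) ^ (s i)) ^ 2 := by
    calc ∏ i, (r i) ^ (r i) = ∏ i, (2 ^ (2 * s i) * ((s i) ^ (s i)) ^ 2) := by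
          refine Finset.prod_congr rfl fun i _ => ?_
          rw [hr2 i, mul_pow, ← pow_mul]
          ring
      _ = (∏ i, 2 ^ (2 * s i)) * ∏ i, ((s i) ^ (s i)) ^ 2 := Finset.prod_mul_distrib
      _ = 2 ^ (2 * ℓ) * ∏ i, ((s i) ^ (s i)) ^ 2 := by
          rw [Finset.prod_pow_eq_pow_sum]
          congr 1
          rw [← Finset.mul_sum, hssum]
  rw [h1, hexp]
  have h2 : ∏ i, ((s i) ^ (s i)) ^ 2 ≤ M ^ (2 * M) := by
    calc ∏ i, ((s i) ^ (s i)) ^ 2 = (∏ i, (s i) ^ (s i)) ^ 2 := by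
          rw [Finset.prod_pow]
      _ ≤ (M ^ M) ^ 2 := Nat.pow_le_pow_left hM 2
      _ = M ^ (2 * M) := by rw [← pow_mul]; ring_nf
  exact Nat.mul_le_mul_left _ h2
end

section
/- Let z_1, …, z_n be i.i.d. Rademacher random variables (each equal to +1 or −1 with probability 1/2), and let S_n = Σ_{i=1}^n z_i. Then for every c with 0 < c ≤ 1/(32n): E[ exp( c·(S_n² − n) ) ] ≤ exp(cn). -/
set_option autoImplicit false

open MeasureTheory ProbabilityTheory

/-!
Adding one independent Rademacher sign ε to T averages over ε = ±1:
E exp(a(T+ε)²) = eᵃ E[exp(aT²) cosh(2aT)] ≤ eᵃ E exp((a + 2a²)T²), by cosh y ≤ exp(y²/2).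
Peeling off the summands one at a time, the coefficient a grows to a + 2a² at each step;
as long as 4a·|s| ≤ 1 this growth costs at most a factor e^{2a} per summand, so
E exp(c Sₙ²) ≤ exp(2cn), which is the claim after dividing by exp(cn).
-/

open Real Finset

lemma Real.exp_mul_eq_cosh_add_mul_sinh {e : ℝ} (he : e = 1 ∨ e = -1) (y : ℝ) :
    exp (e * y) = cosh y + e * sinh y := by
  rcases he with rfl | rfl
  · simp [cosh_add_sinh]
  · simp [cosh_sub_sinh, ← sub_eq_add_neg]

lemma Real.exp_mul_sq_mul_cosh_le (a x : ℝ) :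
    exp (a * x ^ 2) * cosh (2 * a * x) ≤ exp ((a + 2 * a ^ 2) * x ^ 2) :=
  calc exp (a * x ^ 2) * cosh (2 * a * x)
      ≤ exp (a * x ^ 2) * exp ((2 * a * x) ^ 2 / 2) := by gcongr; exact cosh_le_exp_half_sq _
    _ = exp ((a + 2 * a ^ 2) * x ^ 2) := by rw [← exp_add]; ring_nf

section

variable {Ω : Type*} [MeasurableSpace Ω] {μ : Measure Ω}

lemma Continuous.integrable_comp_of_ae_abs_le [IsFiniteMeasure μ] {g : ℝ → ℝ}
    (hg : Continuous g) {T : Ω → ℝ} {M : ℝ} (hT : AEStronglyMeasurable T μ)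
    (hTM : ∀ᵐ ω ∂μ, |T ω| ≤ M) : Integrable (fun ω ↦ g (T ω)) μ := by
  obtain ⟨C, hC⟩ := (isCompact_Icc (a := -M) (b := M)).exists_bound_of_continuousOn hg.continuousOn
  refine .of_bound (hg.comp_aestronglyMeasurable hT) C ?_
  filter_upwards [hTM] with ω hω using hC _ (abs_le.1 hω)

lemma ae_abs_sum_le_card {ι : Type*} {z : ι → Ω → ℝ}
    (hpm : ∀ i, ∀ᵐ ω ∂μ, z i ω = 1 ∨ z i ω = -1) (s : Finset ι) :
    ∀ᵐ ω ∂μ, |∑ i ∈ s, z i ω| ≤ #s := by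
  filter_upwards [(Filter.eventually_all_finset s).2 fun i _ ↦ hpm i] with ω hω
  calc |∑ i ∈ s, z i ω| ≤ ∑ i ∈ s, |z i ω| := abs_sum_le_sum_abs _ _
    _ = #s := by
      rw [card_eq_sum_ones, Nat.cast_sum]
      refine sum_congr rfl fun i hi ↦ ?_
      rcases hω i hi with h | h <;> simp [h]

variable [IsProbabilityMeasure μ]

lemma integral_exp_mul_add_sq_le {T ε : Ω → ℝ} {M : ℝ} (a : ℝ) (hind : IndepFun T ε μ)
    (hT : AEStronglyMeasurable T μ) (hTM : ∀ᵐ ω ∂μ, |T ω| ≤ M) (hε : AEStronglyMeasurable ε μ)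
    (hpm : ∀ᵐ ω ∂μ, ε ω = 1 ∨ ε ω = -1) (hmean : ∫ ω, ε ω ∂μ = 0) :
    ∫ ω, exp (a * (T ω + ε ω) ^ 2) ∂μ ≤ exp a * ∫ ω, exp ((a + 2 * a ^ 2) * T ω ^ 2) ∂μ := by
  set f : ℝ → ℝ := fun x ↦ exp (a * x ^ 2) * cosh (2 * a * x)
  set g : ℝ → ℝ := fun x ↦ exp (a * x ^ 2) * sinh (2 * a * x)
  have hf : Continuous f := by fun_prop
  have hg : Continuous g := by fun_prop
  have hexpand : ∀ᵐ ω ∂μ, exp (a * (T ω + ε ω) ^ 2) = exp a * (f (T ω) + g (T ω) * ε ω) := by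
    filter_upwards [hpm] with ω hω
    have hsq : ε ω ^ 2 = 1 := by rcases hω with h | h <;> simp [h]
    calc exp (a * (T ω + ε ω) ^ 2)
        = exp a * (exp (a * T ω ^ 2) * exp (ε ω * (2 * a * T ω))) := by
          rw [← exp_add, ← exp_add]; congr 1; linear_combination a * hsq
      _ = exp a * (f (T ω) + g (T ω) * ε ω) := by rw [exp_mul_eq_cosh_add_mul_sinh hω]; ring
  have hεbdd : ∀ᵐ ω ∂μ, ‖ε ω‖ ≤ 1 := by
    filter_upwards [hpm] with ω hω
    rcases hω with h | h <;> simp [h]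
  have hgε : ∫ ω, g (T ω) * ε ω ∂μ = 0 := by
    simpa [hmean] using (hind.comp hg.measurable measurable_id).integral_fun_mul_eq_mul_integral
      (hg.comp_aestronglyMeasurable hT) hε
  calc ∫ ω, exp (a * (T ω + ε ω) ^ 2) ∂μ = exp a * ∫ ω, f (T ω) ∂μ := by
        rw [integral_congr_ae hexpand, integral_const_mul, integral_add
          (hf.integrable_comp_of_ae_abs_le hT hTM)
          ((hg.integrable_comp_of_ae_abs_le hT hTM).mul_bdd hε hεbdd), hgε, add_zero]
    _ ≤ exp a * ∫ ω, exp ((a + 2 * a ^ 2) * T ω ^ 2) ∂μ := by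
        have hexp : Continuous fun x ↦ exp ((a + 2 * a ^ 2) * x ^ 2) := by fun_prop
        refine mul_le_mul_of_nonneg_left ?_ (exp_nonneg a)
        exact integral_mono (hf.integrable_comp_of_ae_abs_le hT hTM)
          (hexp.integrable_comp_of_ae_abs_le hT hTM) fun ω ↦ exp_mul_sq_mul_cosh_le a (T ω)

theorem integral_exp_mul_sum_sq_le {ι : Type*} {z : ι → Ω → ℝ}
    (hmeas : ∀ i, AEMeasurable (z i) μ) (hindep : iIndepFun z μ)
    (hpm : ∀ i, ∀ᵐ ω ∂μ, z i ω = 1 ∨ z i ω = -1) (hmean : ∀ i, ∫ ω, z i ω ∂μ = 0)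
    (s : Finset ι) {a : ℝ} (ha : 0 ≤ a) (has : 4 * a * #s ≤ 1) :
    ∫ ω, exp (a * (∑ i ∈ s, z i ω) ^ 2) ∂μ ≤ exp (2 * a * #s) := by
  classical
  induction s using Finset.induction_on generalizing a with
  | empty => simp
  | @insert j t hj ih =>
    rw [card_insert_of_notMem hj, Nat.cast_add_one] at has ⊢
    have hind : IndepFun (∑ i ∈ t, z i) (z j) μ := hindep.indepFun_finsetSum_of_notMem₀ hmeas hj
    have hT : AEStronglyMeasurable (∑ i ∈ t, z i) μ :=
      (t.aemeasurable_sum fun i _ ↦ hmeas i).aestronglyMeasurable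
    have hstep := integral_exp_mul_add_sq_le a hind hT (by simpa using ae_abs_sum_le_card hpm t)
      (hmeas j).aestronglyMeasurable (hpm j) (hmean j)
    simp only [Finset.sum_apply] at hstep
    have hrec := ih (a := a + 2 * a ^ 2) (by positivity) (by nlinarith)
    calc ∫ ω, exp (a * (∑ i ∈ insert j t, z i ω) ^ 2) ∂μ
        = ∫ ω, exp (a * (∑ i ∈ t, z i ω + z j ω) ^ 2) ∂μ := by simp_rw [sum_insert hj, add_comm]
      _ ≤ exp a * exp (2 * (a + 2 * a ^ 2) * #t) := hstep.trans (by gcongr)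
      _ ≤ exp (2 * a * (#t + 1)) := by rw [← exp_add]; gcongr; nlinarith

lemma ae_eq_one_or_eq_neg_one_of_measure_eq_half {X : Ω → ℝ} (hX : AEMeasurable X μ)
    (hone : μ {ω | X ω = 1} = ENNReal.ofReal (1 / 2))
    (hmone : μ {ω | X ω = -1} = ENNReal.ofReal (1 / 2)) :
    ∀ᵐ ω ∂μ, X ω = 1 ∨ X ω = -1 := by
  have hnull (x : ℝ) : NullMeasurableSet {ω | X ω = x} μ :=
    hX.nullMeasurableSet_preimage (measurableSet_singleton x)
  have hdisj : AEDisjoint μ {ω | X ω = 1} {ω | X ω = -1} :=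
    Disjoint.aedisjoint (Set.disjoint_left.2 fun ω (h1 : X ω = 1) (h2 : X ω = -1) ↦ by linarith)
  refine (ae_iff_measure_eq ?_).2 ?_ <;> rw [Set.ofPred_or]
  · exact (hnull 1).union (hnull (-1))
  · rw [measure_union₀ (hnull (-1)) hdisj, hone, hmone,
      ← ENNReal.ofReal_add (by norm_num) (by norm_num)]
    norm_num

lemma integral_eq_zero_of_measure_eq_half {X : Ω → ℝ} (hX : AEMeasurable X μ)
    (hone : μ {ω | X ω = 1} = ENNReal.ofReal (1 / 2))
    (hmone : μ {ω | X ω = -1} = ENNReal.ofReal (1 / 2)) :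
    ∫ ω, X ω ∂μ = 0 := by
  have hnull (x : ℝ) : NullMeasurableSet {ω | X ω = x} μ :=
    hX.nullMeasurableSet_preimage (measurableSet_singleton x)
  have hae : X =ᵐ[μ] fun ω ↦
      {ω | X ω = 1}.indicator (fun _ ↦ (1 : ℝ)) ω - {ω | X ω = -1}.indicator (fun _ ↦ 1) ω := by
    filter_upwards [ae_eq_one_or_eq_neg_one_of_measure_eq_half hX hone hmone] with ω hω
    rcases hω with h | h <;> norm_num [Set.indicator, h]
  have hint (x : ℝ) : Integrable ({ω | X ω = x}.indicator fun _ ↦ (1 : ℝ)) μ :=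
    (integrable_const 1).integrableOn.integrable_indicator₀ (hnull x)
  rw [integral_congr_ae hae, integral_sub (hint 1) (hint (-1)), integral_indicator₀ (hnull 1),
    integral_indicator₀ (hnull (-1))]
  simp [measureReal_def, hone, hmone]

end

theorem rademacher_square_mgf_bound_general
    {Ω : Type*} [MeasurableSpace Ω] (μ : Measure Ω) [IsProbabilityMeasure μ]
    (n : ℕ)
    (z : Fin n → Ω → ℝ)
    (hmeas : ∀ i, Measurable (z i))
    (hindep : iIndepFun z μ)
    (hone : ∀ i, μ {ω | z i ω = 1} = ENNReal.ofReal (1 / 2))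
    (hmone : ∀ i, μ {ω | z i ω = -1} = ENNReal.ofReal (1 / 2))
    (c : ℝ) (hc0 : 0 < c) (hc : c ≤ 1 / (32 * n)) :
    ∫ ω, Real.exp (c * ((∑ i, z i ω) ^ 2 - n)) ∂μ ≤ Real.exp (c * n) := by
  have hpm i := ae_eq_one_or_eq_neg_one_of_measure_eq_half (hmeas i).aemeasurable (hone i) (hmone i)
  have hmean i := integral_eq_zero_of_measure_eq_half (hmeas i).aemeasurable (hone i) (hmone i)
  have hcn : 4 * c * n ≤ 1 := by
    have h32 : 32 * n * c ≤ 1 := (mul_le_mul_of_nonneg_left hc (by positivity)).trans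
      (by rw [mul_one_div]; exact div_self_le_one _)
    nlinarith
  have hsq := integral_exp_mul_sum_sq_le (fun i ↦ (hmeas i).aemeasurable) hindep hpm hmean univ
    hc0.le (by simpa using hcn)
  simp only [card_univ, Fintype.card_fin] at hsq
  calc ∫ ω, exp (c * ((∑ i, z i ω) ^ 2 - n)) ∂μ
      = (∫ ω, exp (c * (∑ i, z i ω) ^ 2) ∂μ) / exp (c * n) := by
        simp_rw [mul_sub, exp_sub]
        exact integral_div _ _
    _ ≤ exp (2 * c * n) / exp (c * n) := by gcongr
    _ = exp (c * n) := by rw [← exp_sub]; ring_nf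

/-- The Rademacher moment-generating-function bound used in the proof of
Theorem 5: `E[exp(c(Sₙ² − n))] ≤ exp(cn)` for `0 < c ≤ 1/(32n)`. -/
theorem rademacher_square_mgf_bound
    {Ω : Type*} [MeasurableSpace Ω] (μ : Measure Ω) [IsProbabilityMeasure μ]
    (n : ℕ) (hn : 0 < n)
    (z : Fin n → Ω → ℝ)
    (hmeas : ∀ i, Measurable (z i))
    (hindep : iIndepFun z μ)
    (hone : ∀ i, μ {ω | z i ω = 1} = ENNReal.ofReal (1 / 2))
    (hmone : ∀ i, μ {ω | z i ω = -1} = ENNReal.ofReal (1 / 2))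
    (c : ℝ) (hc0 : 0 < c) (hc : c ≤ 1 / (32 * n)) :
    ∫ ω, Real.exp (c * ((∑ i, z i ω) ^ 2 - n)) ∂μ ≤ Real.exp (c * n) :=
  rademacher_square_mgf_bound_general μ n z hmeas hindep hone hmone c hc0 hc
end
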